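/- Let d = 2 or d = 3 and let m, l > 0. Let u : ℝ^d → ℂ be a Schwartz function with ∫_{ℝ^d} |u|² dx = m and L(u) = l. Assume either (a) l/m ∉ ℤ, or (b) l/m = n ∈ ℤ but u is not an eigenfunction of L_z with eigenvalue n (i.e. L_z u ≠ n u). Then u is regular, i.e. u and L_z u are linearly independent over ℝ: if λ₁, λ₂ ∈ ℝ satisfy λ₁ u + λ₂ L_z u = 0 identically on ℝ^d, then λ₁ = λ₂ = 0. -/

import Mathlib

/-!
If `λ₂ ≠ 0`, the relation makes `u` an eigenfunction of `L_z` with the real eigenvalue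
`c = -λ₁/λ₂`, and then `L(u) = c ∫ |u|²`, so `c = l/m`. Since `i L_z` generates the
rotations `R_θ` in the `(x₁, x₂)`-plane, `u (R_θ x) = exp (i c θ) u x`; a full turn at a
point where `u ≠ 0` gives `exp (2π i c) = 1`, so `c ∈ ℤ`, which contradicts (a), while (b)
excludes `L_z u = (l/m) u` outright. If `λ₂ = 0`, then `λ₁ u = 0` with `u ≠ 0`.
-/

open MeasureTheory Real Complex Filter

noncomputable section

/-- Angular momentum operator `L_z u = -i (x₁ ∂₂ u - x₂ ∂₁ u)`. -/
def Lz {d : ℕ} (u : EuclideanSpace ℝ (Fin d) → ℂ) (x : EuclideanSpace ℝ (Fin d)) : ℂ :=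
  if h : 1 < d then
    -Complex.I * (((x ⟨0, by omega⟩ : ℝ) : ℂ) * fderiv ℝ u x (EuclideanSpace.single ⟨1, h⟩ 1)
      - ((x ⟨1, h⟩ : ℝ) : ℂ) * fderiv ℝ u x (EuclideanSpace.single ⟨0, by omega⟩ 1))
  else 0

/-- Angular momentum `L(u) = ∫ (L_z u) ū`. -/
def angMom {d : ℕ} (u : EuclideanSpace ℝ (Fin d) → ℂ) : ℂ :=
  ∫ x, Lz u x * (starRingEnd ℂ) (u x)

variable {d : ℕ}

/-- Rotation by `θ` in the `(x₁, x₂)`-plane, written as a displacement of `x`. -/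
def planeRotation (hd : 1 < d) (θ : ℝ) (x : EuclideanSpace ℝ (Fin d)) :
    EuclideanSpace ℝ (Fin d) :=
  x + (((Real.cos θ - 1) * x ⟨0, by omega⟩ - Real.sin θ * x ⟨1, hd⟩) •
      EuclideanSpace.single ⟨0, by omega⟩ 1
    + (Real.sin θ * x ⟨0, by omega⟩ + (Real.cos θ - 1) * x ⟨1, hd⟩) •
      EuclideanSpace.single ⟨1, hd⟩ 1)

section planeRotation

variable (hd : 1 < d) (θ : ℝ) (x : EuclideanSpace ℝ (Fin d))

lemma planeRotation_apply_zero :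
    planeRotation hd θ x ⟨0, by omega⟩ =
      Real.cos θ * x ⟨0, by omega⟩ - Real.sin θ * x ⟨1, hd⟩ := by
  simp [planeRotation, Fin.ext_iff]
  ring

lemma planeRotation_apply_one :
    planeRotation hd θ x ⟨1, hd⟩ =
      Real.sin θ * x ⟨0, by omega⟩ + Real.cos θ * x ⟨1, hd⟩ := by
  simp [planeRotation, Fin.ext_iff]
  ring

@[simp]
lemma planeRotation_zero : planeRotation hd 0 x = x := by
  simp [planeRotation]

lemma planeRotation_two_pi : planeRotation hd (2 * π) x = x := by
  simp [planeRotation]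

lemma hasDerivAt_planeRotation :
    HasDerivAt (fun θ => planeRotation hd θ x)
      ((-planeRotation hd θ x ⟨1, hd⟩) • EuclideanSpace.single ⟨0, by omega⟩ 1
        + planeRotation hd θ x ⟨0, by omega⟩ • EuclideanSpace.single ⟨1, hd⟩ 1) θ := by
  have h₀ := (((Real.hasDerivAt_cos θ).sub_const 1).mul_const (x ⟨0, by omega⟩)).sub
    ((Real.hasDerivAt_sin θ).mul_const (x ⟨1, hd⟩))
  have h₁ := ((Real.hasDerivAt_sin θ).mul_const (x ⟨0, by omega⟩)).add
    (((Real.hasDerivAt_cos θ).sub_const 1).mul_const (x ⟨1, hd⟩))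
  have h := ((h₀.smul_const (EuclideanSpace.single ⟨0, by omega⟩ (1 : ℝ))).add
      (h₁.smul_const (EuclideanSpace.single ⟨1, hd⟩ (1 : ℝ)))).const_add x
  refine (h.congr_deriv ?_).congr_of_eventuallyEq (.of_forall fun θ => rfl)
  rw [planeRotation_apply_zero, planeRotation_apply_one]
  module

end planeRotation

section eigenfunction

variable {u : EuclideanSpace ℝ (Fin d) → ℂ}

lemma hasDerivAt_comp_planeRotation (hd : 1 < d) (hu : Differentiable ℝ u) (θ : ℝ)
    (x : EuclideanSpace ℝ (Fin d)) :
    HasDerivAt (fun θ => u (planeRotation hd θ x)) (I * Lz u (planeRotation hd θ x)) θ := by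
  refine ((hu _).hasFDerivAt.comp_hasDerivAt θ (hasDerivAt_planeRotation hd θ x)).congr_deriv ?_
  simp only [Lz, dif_pos hd, map_add, map_smul, Complex.real_smul, ofReal_neg]
  ring_nf
  rw [I_sq]
  ring

lemma comp_planeRotation_of_Lz_eq_smul (hd : 1 < d) (hu : Differentiable ℝ u) {c : ℂ}
    (heig : ∀ y, Lz u y = c * u y) (θ : ℝ) (x : EuclideanSpace ℝ (Fin d)) :
    u (planeRotation hd θ x) = exp (I * c * θ) * u x := by
  have hderiv (θ : ℝ) :
      HasDerivAt (fun θ : ℝ => exp (-(I * c * θ)) * u (planeRotation hd θ x)) 0 θ := by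
    have hlin : HasDerivAt (fun θ : ℝ => -(I * c * θ)) (-(I * c)) θ := by
      simpa using ((hasDerivAt_id (θ : ℂ)).const_mul (-(I * c))).comp_ofReal
    refine (hlin.cexp.mul (hasDerivAt_comp_planeRotation hd hu θ x)).congr_deriv ?_
    rw [heig]
    ring
  have hconst := is_const_of_deriv_eq_zero (fun θ => (hderiv θ).differentiableAt)
    (fun θ => (hderiv θ).deriv) θ 0
  simp only [ofReal_zero, mul_zero, neg_zero, Complex.exp_zero, one_mul,
    planeRotation_zero] at hconst
  rw [← hconst, ← mul_assoc, ← Complex.exp_add]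
  simp

lemma exists_int_eq_of_Lz_eq_smul (hd : 1 < d) (hu : Differentiable ℝ u) {c : ℝ}
    (heig : ∀ y, Lz u y = c * u y) {x : EuclideanSpace ℝ (Fin d)} (hx : u x ≠ 0) :
    ∃ n : ℤ, c = n := by
  have hturn := comp_planeRotation_of_Lz_eq_smul hd hu heig (2 * π) x
  rw [planeRotation_two_pi] at hturn
  obtain ⟨n, hn⟩ := exp_eq_one_iff.mp (mul_right_cancel₀ hx (by rwa [one_mul, eq_comm]))
  refine ⟨n, ?_⟩
  have hne : (2 * π * I : ℂ) ≠ 0 := by simp [pi_ne_zero, I_ne_zero]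
  have hc : (c : ℂ) = n := mul_right_cancel₀ hne (by push_cast at hn; linear_combination hn)
  exact_mod_cast hc

end eigenfunction

lemma angMom_of_Lz_eq_smul {u : EuclideanSpace ℝ (Fin d) → ℂ} {c : ℂ}
    (heig : ∀ y, Lz u y = c * u y) :
    angMom u = c * ∫ x, ‖u x‖ ^ 2 := by
  have hpt (x : EuclideanSpace ℝ (Fin d)) :
      Lz u x * starRingEnd ℂ (u x) = c * ((‖u x‖ ^ 2 : ℝ) : ℂ) := by
    rw [heig, mul_assoc, mul_conj, normSq_eq_norm_sq]
  simp only [angMom, hpt, integral_const_mul, integral_complex_ofReal]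

theorem constraint_regularity_general (d : ℕ) (hd : d = 2 ∨ d = 3) (m l : ℝ)
    (hm : 0 < m)
    (u : SchwartzMap (EuclideanSpace ℝ (Fin d)) ℂ)
    (hmass : (∫ x, ‖u x‖ ^ 2) = m) (hang : angMom (⇑u) = (l : ℂ))
    (hcase : (¬ ∃ n : ℤ, l / m = (n : ℝ)) ∨
      (∃ n : ℤ, l / m = (n : ℝ) ∧
        ¬ ∀ x : EuclideanSpace ℝ (Fin d), Lz (⇑u) x = ((n : ℝ) : ℂ) * u x)) :
    ∀ l₁ l₂ : ℝ,
      (∀ x : EuclideanSpace ℝ (Fin d), (l₁ : ℂ) * u x + (l₂ : ℂ) * Lz (⇑u) x = 0) →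
      l₁ = 0 ∧ l₂ = 0 := by
  intro l₁ l₂ hlin
  have hd₁ : 1 < d := by omega
  obtain ⟨x₀, hx₀⟩ : ∃ x, u x ≠ 0 := by
    by_contra! hzero
    simp [hzero] at hmass
    linarith
  by_cases hl₂ : l₂ = 0
  · subst hl₂
    simpa [hx₀] using hlin x₀
  have heig (x : EuclideanSpace ℝ (Fin d)) : Lz u x = ((-l₁ / l₂ : ℝ) : ℂ) * u x := by
    have hl₂' : (l₂ : ℂ) ≠ 0 := by exact_mod_cast hl₂
    push_cast
    field_simp
    linear_combination hlin x
  have hc : -l₁ / l₂ = l / m := by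
    rw [angMom_of_Lz_eq_smul heig, hmass] at hang
    rw [eq_div_iff hm.ne']
    exact_mod_cast hang
  rw [hc] at heig
  rcases hcase with hnot | ⟨n, hn, hne⟩
  · exact absurd (exists_int_eq_of_Lz_eq_smul hd₁ u.differentiable heig hx₀) hnot
  · exact absurd (hn ▸ heig) hne

/-- Regularity of constrained minimizers: if `∫|u|² = m`, `L(u) = l`, and either
`l/m ∉ ℤ`, or `l/m = n ∈ ℤ` but `u` is not an eigenfunction of `L_z` with
eigenvalue `n`, then `u` and `L_z u` are linearly independent over `ℝ`. -/
theorem constraint_regularity (d : ℕ) (hd : d = 2 ∨ d = 3) (m l : ℝ)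
    (hm : 0 < m) (hl : 0 < l)
    (u : SchwartzMap (EuclideanSpace ℝ (Fin d)) ℂ)
    (hmass : (∫ x, ‖u x‖ ^ 2) = m) (hang : angMom (⇑u) = (l : ℂ))
    (hcase : (¬ ∃ n : ℤ, l / m = (n : ℝ)) ∨
      (∃ n : ℤ, l / m = (n : ℝ) ∧
        ¬ ∀ x : EuclideanSpace ℝ (Fin d), Lz (⇑u) x = ((n : ℝ) : ℂ) * u x)) :
    ∀ l₁ l₂ : ℝ,
      (∀ x : EuclideanSpace ℝ (Fin d), (l₁ : ℂ) * u x + (l₂ : ℂ) * Lz (⇑u) x = 0) →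
      l₁ = 0 ∧ l₂ = 0 :=
  constraint_regularity_general d hd m l hm u hmass hang hcase

end
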